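/- In the space X = ([0,1] × {0}) ∪ {(1/2, 1/m) : m ∈ ℕ, m ≥ 1} of the preceding construction, for each n ≥ 1 the subspace Y_n = ([0,1] × {0}) ∪ {(1/2, 1/m) : 1 ≤ m < n} is open in X, compact, (n+1)-Hausdorff, and not n-Hausdorff. -/
import Mathlib


open Set

/-- `X` is `τ`-Hausdorff: every subset `A` with `|A| ≥ τ` admits open neighborhoods
of its points with empty intersection. -/
def NHausdorff (X : Type*) [TopologicalSpace X] (τ : Cardinal) : Prop :=
  ∀ A : Set X, τ ≤ Cardinal.mk A →
    ∃ U : X → Set X, (∀ a ∈ A, IsOpen (U a) ∧ a ∈ U a) ∧ (⋂ a ∈ A, U a) = ∅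

/-- `X = ([0,1] × {0}) ∪ {(1/2, 1/m) : m ∈ ℕ, m ≥ 1}`. -/
def Sw : Set (ℝ × ℝ) :=
  (Set.Icc (0 : ℝ) 1 ×ˢ {(0 : ℝ)}) ∪ {p | ∃ m : ℕ, 1 ≤ m ∧ p = ((1/2 : ℝ), 1/(m : ℝ))}

/-- The basic neighborhood `U_k((1/2, 1/m))`:
`{(1/2,1/m)} ∪ (((1/2 − 1/k, 1/2 + 1/k) \ {1/2}) × {0})`. -/
def Uw (m k : ℕ) : Set Sw :=
  {p : Sw | (p : ℝ × ℝ) = (1/2, 1/(m : ℝ)) ∨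
    ((p : ℝ × ℝ).2 = 0 ∧ (p : ℝ × ℝ).1 ∈ Set.Ioo (1/2 - 1/(k : ℝ)) (1/2 + 1/(k : ℝ)) ∧
      (p : ℝ × ℝ).1 ≠ 1/2)}

/-- Traces on the line `[0,1] × {0}` of Euclidean open sets. -/
def lineOpensw : Set (Set Sw) :=
  {V | ∃ W : Set ℝ, IsOpen W ∧ V = {p : Sw | (p : ℝ × ℝ).2 = 0 ∧ (p : ℝ × ℝ).1 ∈ W}}

/-- The topology on `Sw`: Euclidean neighborhoods on the line, and the `U_k((1/2,1/m))`
as neighborhood bases at the special points. -/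
def Twex : TopologicalSpace Sw :=
  TopologicalSpace.generateFrom
    (lineOpensw ∪ {V | ∃ m k : ℕ, 1 ≤ m ∧ 1 ≤ k ∧ V = Uw m k})

/-- The subspace `Y_n = ([0,1] × {0}) ∪ {(1/2, 1/m) : 1 ≤ m < n}` of `Sw`. -/
def Yn (n : ℕ) : Set Sw :=
  {p : Sw | (p : ℝ × ℝ).2 = 0 ∨ ∃ m : ℕ, 1 ≤ m ∧ m < n ∧ (p : ℝ × ℝ) = (1/2, 1/(m : ℝ))}

namespace Stmt19

open TopologicalSpace

def Sgen : Set (Set Sw) := lineOpensw ∪ {V | ∃ m k : ℕ, 1 ≤ m ∧ 1 ≤ k ∧ V = Uw m k}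

def linePt (x : Icc (0:ℝ) 1) : Sw := ⟨((x:ℝ), 0), Or.inl ⟨x.2, rfl⟩⟩

lemma isOpen_lineTrace (W : Set ℝ) (hW : IsOpen W) :
    GenerateOpen Sgen {p : Sw | (p : ℝ × ℝ).2 = 0 ∧ (p : ℝ × ℝ).1 ∈ W} :=
  GenerateOpen.basic _ (Or.inl ⟨W, hW, rfl⟩)

lemma isOpen_Uw (m k : ℕ) (hm : 1 ≤ m) (hk : 1 ≤ k) : GenerateOpen Sgen (Uw m k) :=
  GenerateOpen.basic _ (Or.inr ⟨m, k, hm, hk, rfl⟩)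

/-- Every `Twex`-open set containing a point with first coordinate `1/2` contains the
points `(x,0)` of a punctured interval around `1/2`. -/
lemma punct (V : Set Sw) (hV : GenerateOpen Sgen V) (b : Sw) (hb : (b : ℝ × ℝ).1 = 1/2) :
    b ∈ V → ∃ ε > 0, ∀ x : Icc (0:ℝ) 1,
      (x:ℝ) ≠ 1/2 → |(x:ℝ) - 1/2| < ε → linePt x ∈ V := by
  induction hV with
  | basic V hVS =>
    intro hbV
    rcases hVS with ⟨W, hW, rfl⟩ | ⟨m, k, hm, hk, rfl⟩
    · obtain ⟨hb2, hbW⟩ := hbV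
      rw [hb] at hbW
      obtain ⟨ε, hε, hball⟩ := Metric.isOpen_iff.mp hW _ hbW
      refine ⟨ε, hε, fun x hx hlt => ⟨rfl, hball ?_⟩⟩
      rw [Metric.mem_ball, Real.dist_eq]; exact hlt
    · have hk' : (0:ℝ) < 1/(k:ℝ) := by
        have : (0:ℝ) < k := by exact_mod_cast hk
        positivity
      refine ⟨1/(k:ℝ), hk', fun x hx hlt => Or.inr ⟨rfl, ?_, hx⟩⟩
      have := abs_lt.mp hlt
      show (x:ℝ) ∈ Set.Ioo _ _
      exact ⟨by linarith [this.1], by linarith [this.2]⟩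
  | univ => exact fun _ => ⟨1, one_pos, fun x _ _ => trivial⟩
  | inter V₁ V₂ h₁ h₂ ih₁ ih₂ =>
    rintro ⟨hb1, hb2⟩
    obtain ⟨ε₁, hε₁, H₁⟩ := ih₁ hb1
    obtain ⟨ε₂, hε₂, H₂⟩ := ih₂ hb2
    exact ⟨min ε₁ ε₂, lt_min hε₁ hε₂, fun x hx hlt =>
      ⟨H₁ x hx (hlt.trans_le (min_le_left _ _)), H₂ x hx (hlt.trans_le (min_le_right _ _))⟩⟩
  | sUnion S hS ih =>
    rintro ⟨t, ht, hbt⟩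
    obtain ⟨ε, hε, H⟩ := ih t ht hbt
    exact ⟨ε, hε, fun x hx hlt => ⟨t, ht, H x hx hlt⟩⟩


lemma yn_open (n : ℕ) : Twex.IsOpen (Yn n) := by
  have heq : Yn n = {p : Sw | (p : ℝ × ℝ).2 = 0 ∧ (p : ℝ × ℝ).1 ∈ (univ : Set ℝ)} ∪
      ⋃ m ∈ Finset.Ico 1 n, Uw m 1 := by
    ext p
    simp only [Yn, mem_setOf_eq, Set.mem_union, Set.mem_iUnion, Finset.mem_Ico, Uw,
      Set.mem_setOf_eq, mem_univ, and_true]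
    constructor
    · rintro (h0 | ⟨m, hm1, hmn, hp⟩)
      · exact Or.inl h0
      · exact Or.inr ⟨m, ⟨hm1, hmn⟩, Or.inl hp⟩
    · rintro (h0 | ⟨m, ⟨hm1, hmn⟩, (hp | ⟨h0, _, _⟩)⟩)
      · exact Or.inl h0
      · exact Or.inr ⟨m, hm1, hmn, hp⟩
      · exact Or.inl h0
  letI : TopologicalSpace Sw := generateFrom Sgen
  show IsOpen (Yn n)
  rw [heq]
  have h1 : IsOpen {p : Sw | (p : ℝ × ℝ).2 = 0 ∧ (p : ℝ × ℝ).1 ∈ (univ : Set ℝ)} :=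
    isOpen_lineTrace univ isOpen_univ
  have h2 : IsOpen (⋃ m ∈ Finset.Ico 1 n, Uw m 1) :=
    isOpen_biUnion fun m hm => isOpen_Uw m 1 (Finset.mem_Ico.mp hm).1 le_rfl
  exact h1.union h2

lemma cont_linePt : @Continuous (Icc (0:ℝ) 1) Sw _ Twex linePt := by
  show @Continuous _ _ _ (generateFrom Sgen) linePt
  rw [continuous_generateFrom_iff]
  rintro V (⟨W, hW, rfl⟩ | ⟨m, k, hm, hk, rfl⟩)
  · have : linePt ⁻¹' {p : Sw | (p : ℝ × ℝ).2 = 0 ∧ (p : ℝ × ℝ).1 ∈ W}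
        = ((↑) : Icc (0:ℝ) 1 → ℝ) ⁻¹' W := by
      ext x; simp [linePt]
    rw [this]; exact hW.preimage continuous_subtype_val
  · have : linePt ⁻¹' Uw m k
        = ((↑) : Icc (0:ℝ) 1 → ℝ) ⁻¹' (Ioo (1/2 - 1/(k:ℝ)) (1/2 + 1/(k:ℝ)) ∩ {(1/2:ℝ)}ᶜ) := by
      ext x
      simp only [Uw, mem_preimage, mem_setOf_eq, mem_inter_iff, mem_compl_iff,
        mem_singleton_iff]
      constructor
      · rintro (h | ⟨_, hIoo, hne⟩)
        · exfalso
          have h2 : ((linePt x : ℝ × ℝ)).2 = 1/(m:ℝ) := by rw [h]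
          have : (0:ℝ) = 1/(m:ℝ) := h2
          have hm' : (0:ℝ) < (m:ℝ) := by exact_mod_cast hm
          have : (0:ℝ) < 1/(m:ℝ) := by positivity
          simp_all
        · exact ⟨hIoo, hne⟩
      · exact fun ⟨h1, h2⟩ => Or.inr ⟨rfl, h1, h2⟩
    rw [this]
    exact ((isOpen_Ioo.inter isOpen_compl_singleton).preimage continuous_subtype_val)

lemma yn_compact (n : ℕ) : @IsCompact Sw Twex (Yn n) := by
  have h1 : @IsCompact Sw Twex (range linePt) :=
    @isCompact_range _ _ _ Twex _ linePt cont_linePt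
  have hP : (Set.Iio n).Finite := Set.finite_Iio n
  set P : Set Sw := {p : Sw | ∃ m : ℕ, 1 ≤ m ∧ m < n ∧ (p : ℝ × ℝ) = (1/2, 1/(m:ℝ))} with hPdef
  have hPfin : P.Finite := by
    have hsub : P ⊆ (Subtype.val : Sw → ℝ × ℝ) ⁻¹'
        ((fun m : ℕ => ((1/2:ℝ), 1/(m:ℝ))) '' (Set.Iio n)) := by
      rintro p ⟨m, hm1, hmn, hp⟩
      exact ⟨m, hmn, hp.symm⟩
    exact Set.Finite.subset (Set.Finite.preimage (Set.injOn_of_injective Subtype.val_injective)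
      ((Set.finite_Iio n).image _)) hsub
  have h2 : @IsCompact Sw Twex P := @Set.Finite.isCompact _ Twex _ hPfin
  have heq : Yn n = range linePt ∪ P := by
    ext p
    simp only [Yn, mem_setOf_eq, Set.mem_union, mem_range, hPdef]
    constructor
    · rintro (h0 | ⟨m, hm1, hmn, hp⟩)
      · left
        have hIcc : (p : ℝ × ℝ).1 ∈ Icc (0:ℝ) 1 := by
          rcases p.2 with ⟨h1, _⟩ | ⟨m, hm, hpm⟩
          · exact h1
          · exfalso
            have : (p : ℝ × ℝ).2 = 1/(m:ℝ) := by rw [hpm]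
            have hm' : (0:ℝ) < (m:ℝ) := by exact_mod_cast hm
            have : (0:ℝ) < 1/(m:ℝ) := by positivity
            simp_all
        refine ⟨⟨(p : ℝ × ℝ).1, hIcc⟩, ?_⟩
        apply Subtype.ext
        exact Prod.ext rfl h0.symm
      · exact Or.inr ⟨m, hm1, hmn, hp⟩
    · rintro (⟨x, rfl⟩ | ⟨m, hm1, hmn, hp⟩)
      · exact Or.inl rfl
      · exact Or.inr ⟨m, hm1, hmn, hp⟩
  rw [heq]
  exact @IsCompact.union _ Twex _ _ h1 h2

lemma mem0 : ((1/2:ℝ),(0:ℝ)) ∈ Sw := Or.inl ⟨⟨by norm_num, by norm_num⟩, rfl⟩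

lemma memp (m : ℕ) (hm : 1 ≤ m) : ((1/2:ℝ), 1/(m:ℝ)) ∈ Sw := Or.inr ⟨m, hm, rfl⟩

lemma one_div_nat_pos {m : ℕ} (hm : 1 ≤ m) : (0:ℝ) < 1/(m:ℝ) := by
  have : (0:ℝ) < (m:ℝ) := by exact_mod_cast hm
  positivity

/-- points of `Yn n` are equal iff their coordinates are equal -/
lemma yn_ext {n : ℕ} {a b : ↥(Yn n)} (h : (((a : Sw)) : ℝ × ℝ) = ((b : Sw) : ℝ × ℝ)) :
    a = b := Subtype.ext (Subtype.ext h)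

/-- second coordinate description of points of `Yn n` -/
lemma yn_cases {n : ℕ} (a : ↥(Yn n)) :
    ((a : Sw) : ℝ × ℝ).2 = 0 ∨
      ∃ m : ℕ, 1 ≤ m ∧ m < n ∧ ((a : Sw) : ℝ × ℝ) = (1/2, 1/(m:ℝ)) := a.2

/-- any subset of `Yn n` consisting of points with first coordinate `1/2`
injects into `Fin n` -/
lemma injFin (n : ℕ) (hn : 1 ≤ n) (A : Set ↥(Yn n))
    (hA : ∀ a ∈ A, ((a : Sw) : ℝ × ℝ).1 = 1/2) :
    ∃ f : ↥A → Fin n, Function.Injective f := by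
  have hfl : ∀ a : ↥A, (⌊(((a : ↥(Yn n)) : Sw) : ℝ × ℝ).2⁻¹⌋₊ < n) ∧
      ((((a : ↥(Yn n)) : Sw) : ℝ × ℝ).2 = 0 →
        ⌊(((a : ↥(Yn n)) : Sw) : ℝ × ℝ).2⁻¹⌋₊ = 0) ∧
      (∀ m : ℕ, 1 ≤ m → (((a : ↥(Yn n)) : Sw) : ℝ × ℝ).2 = 1/(m:ℝ) →
        ⌊(((a : ↥(Yn n)) : Sw) : ℝ × ℝ).2⁻¹⌋₊ = m) := by
    intro a
    have hmz : ∀ m : ℕ, 1 ≤ m → (((a : ↥(Yn n)) : Sw) : ℝ × ℝ).2 = 1/(m:ℝ) →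
        ⌊(((a : ↥(Yn n)) : Sw) : ℝ × ℝ).2⁻¹⌋₊ = m := by
      intro m hm h2
      rw [h2, one_div, inv_inv, Nat.floor_natCast]
    rcases yn_cases (a : ↥(Yn n)) with h2 | ⟨m, hm1, hmn, hpm⟩
    · refine ⟨?_, fun _ => ?_, hmz⟩ <;> rw [h2] <;> simp [hn]
      omega
    · have h2 : (((a : ↥(Yn n)) : Sw) : ℝ × ℝ).2 = 1/(m:ℝ) := by rw [hpm]
      refine ⟨?_, fun h0 => ?_, hmz⟩
      · rw [hmz m hm1 h2]; exact hmn
      · exfalso; rw [h0] at h2; exact absurd h2.symm (ne_of_gt (one_div_nat_pos hm1))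
  refine ⟨fun a => ⟨⌊(((a : ↥(Yn n)) : Sw) : ℝ × ℝ).2⁻¹⌋₊, (hfl a).1⟩, ?_⟩
  intro a b hab
  have hab' : ⌊(((a : ↥(Yn n)) : Sw) : ℝ × ℝ).2⁻¹⌋₊
      = ⌊(((b : ↥(Yn n)) : Sw) : ℝ × ℝ).2⁻¹⌋₊ := congrArg Fin.val hab
  have h1 : (((a : ↥(Yn n)) : Sw) : ℝ × ℝ).1 = (((b : ↥(Yn n)) : Sw) : ℝ × ℝ).1 := by
    rw [hA _ a.2, hA _ b.2]
  have h2 : (((a : ↥(Yn n)) : Sw) : ℝ × ℝ).2 = (((b : ↥(Yn n)) : Sw) : ℝ × ℝ).2 := by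
    rcases yn_cases (a : ↥(Yn n)) with ha2 | ⟨ma, hma1, _, hpa⟩ <;>
      rcases yn_cases (b : ↥(Yn n)) with hb2 | ⟨mb, hmb1, _, hpb⟩
    · rw [ha2, hb2]
    · exfalso
      have hb2' : (((b : ↥(Yn n)) : Sw) : ℝ × ℝ).2 = 1/(mb:ℝ) := by rw [hpb]
      rw [(hfl a).2.1 ha2, (hfl b).2.2 mb hmb1 hb2'] at hab'
      omega
    · exfalso
      have ha2' : (((a : ↥(Yn n)) : Sw) : ℝ × ℝ).2 = 1/(ma:ℝ) := by rw [hpa]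
      rw [(hfl a).2.2 ma hma1 ha2', (hfl b).2.1 hb2] at hab'
      omega
    · have ha2' : (((a : ↥(Yn n)) : Sw) : ℝ × ℝ).2 = 1/(ma:ℝ) := by rw [hpa]
      have hb2' : (((b : ↥(Yn n)) : Sw) : ℝ × ℝ).2 = 1/(mb:ℝ) := by rw [hpb]
      rw [(hfl a).2.2 ma hma1 ha2', (hfl b).2.2 mb hmb1 hb2'] at hab'
      rw [ha2', hb2', hab']
  exact Subtype.ext (yn_ext (Prod.ext h1 h2))

lemma card_le (n : ℕ) (hn : 1 ≤ n) (A : Set ↥(Yn n))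
    (hA : ∀ a ∈ A, ((a : Sw) : ℝ × ℝ).1 = 1/2) :
    Cardinal.mk ↥A ≤ (n : Cardinal) := by
  obtain ⟨f, hf⟩ := injFin n hn A hA
  calc Cardinal.mk ↥A ≤ Cardinal.mk (Fin n) := Cardinal.mk_le_of_injective hf
    _ = n := Cardinal.mk_fin n

/-- trace of a Euclidean line-open set on `Yn n` is open -/
lemma traceOpen (n : ℕ) (W : Set ℝ) (hW : IsOpen W) :
    (Twex.induced (Subtype.val : Yn n → Sw)).IsOpen
      ((Subtype.val : Yn n → Sw) ⁻¹' {p : Sw | (p : ℝ × ℝ).2 = 0 ∧ (p : ℝ × ℝ).1 ∈ W}) :=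
  ⟨_, isOpen_lineTrace W hW, rfl⟩

lemma traceUw (n m k : ℕ) (hm : 1 ≤ m) (hk : 1 ≤ k) :
    (Twex.induced (Subtype.val : Yn n → Sw)).IsOpen
      ((Subtype.val : Yn n → Sw) ⁻¹' Uw m k) :=
  ⟨_, isOpen_Uw m k hm hk, rfl⟩

end Stmt19


theorem stmt_19 (n : ℕ) (hn : 1 ≤ n) :
    Twex.IsOpen (Yn n) ∧ @IsCompact Sw Twex (Yn n) ∧
    @NHausdorff (Yn n) (Twex.induced (Subtype.val : Yn n → Sw)) (n + 1) ∧
    ¬ @NHausdorff (Yn n) (Twex.induced (Subtype.val : Yn n → Sw)) n := by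
  classical
  refine ⟨Stmt19.yn_open n, Stmt19.yn_compact n, ?_, ?_⟩
  · -- (n+1)-Hausdorff
    intro A hA
    have ex0 : ∃ a₀, a₀ ∈ A ∧ ((a₀ : Sw) : ℝ × ℝ).1 ≠ 1/2 := by
      by_contra h
      push_neg at h
      have hle := Stmt19.card_le n hn A (fun a ha => h a ha)
      have h1 : ((n : Cardinal) + 1) ≤ (n : Cardinal) := le_trans hA hle
      have h2 : ((n + 1 : ℕ) : Cardinal) ≤ ((n : ℕ) : Cardinal) := by push_cast; exact h1
      exact absurd (Nat.cast_le.mp h2) (by omega)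
    obtain ⟨a₀, ha₀A, ha₀⟩ := ex0
    have ex1 : ∃ a₁, a₁ ∈ A ∧ a₁ ≠ a₀ := by
      by_contra h
      push_neg at h
      have hinj : Function.Injective (fun _ : ↥A => (0 : Fin 1)) := by
        intro a b _
        exact Subtype.ext ((h a a.2).trans (h b b.2).symm)
      have hle : Cardinal.mk ↥A ≤ ((1:ℕ) : Cardinal) := by
        calc Cardinal.mk ↥A ≤ Cardinal.mk (Fin 1) := Cardinal.mk_le_of_injective hinj
          _ = ((1:ℕ) : Cardinal) := Cardinal.mk_fin 1
      have h2 : ((n + 1 : ℕ) : Cardinal) ≤ ((1:ℕ) : Cardinal) :=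
        le_trans (by push_cast; exact hA) hle
      exact absurd (Nat.cast_le.mp h2) (by omega)
    obtain ⟨a₁, ha₁A, ha₁⟩ := ex1
    have h02 : ((a₀ : Sw) : ℝ × ℝ).2 = 0 := by
      rcases Stmt19.yn_cases a₀ with h | ⟨m, _, _, hp⟩
      · exact h
      · exact absurd (by rw [hp] : ((a₀ : Sw) : ℝ × ℝ).1 = 1/2) ha₀
    set x : ℝ := ((a₀ : Sw) : ℝ × ℝ).1 with hx
    have sep : ∃ V₀ V₁ : Set ↥(Yn n),
        (Twex.induced (Subtype.val : Yn n → Sw)).IsOpen V₀ ∧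
        (Twex.induced (Subtype.val : Yn n → Sw)).IsOpen V₁ ∧
        a₀ ∈ V₀ ∧ a₁ ∈ V₁ ∧ V₀ ∩ V₁ = ∅ := by
      rcases Stmt19.yn_cases a₁ with h12 | ⟨m, hm1, hmn, hpm⟩
      · -- both on the line
        set y : ℝ := ((a₁ : Sw) : ℝ × ℝ).1 with hy
        have hxy : x ≠ y := by
          intro hxyeq
          apply ha₁
          apply Stmt19.yn_ext
          apply Prod.ext
          · rw [← hy, ← hx]; exact hxyeq.symm
          · rw [h12, h02]
        have hd : 0 < |x - y| := abs_pos.mpr (sub_ne_zero.mpr hxy)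
        refine ⟨(Subtype.val : Yn n → Sw) ⁻¹' {p : Sw | (p : ℝ × ℝ).2 = 0 ∧
            (p : ℝ × ℝ).1 ∈ Metric.ball x (|x-y|/2)},
          (Subtype.val : Yn n → Sw) ⁻¹' {p : Sw | (p : ℝ × ℝ).2 = 0 ∧
            (p : ℝ × ℝ).1 ∈ Metric.ball y (|x-y|/2)},
          Stmt19.traceOpen n _ Metric.isOpen_ball, Stmt19.traceOpen n _ Metric.isOpen_ball,
          ⟨h02, Metric.mem_ball_self (by positivity)⟩,
          ⟨h12, Metric.mem_ball_self (by positivity)⟩, ?_⟩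
        rw [Set.eq_empty_iff_forall_notMem]
        rintro q ⟨⟨hq2, hqx⟩, _, hqy⟩
        rw [Metric.mem_ball, Real.dist_eq] at hqx hqy
        have htri : |x - y| ≤ |x - ((q : Sw) : ℝ × ℝ).1| + |((q : Sw) : ℝ × ℝ).1 - y| :=
          abs_sub_le _ _ _
        rw [abs_sub_comm] at hqx
        linarith
      · -- a₁ is a special point
        have hd : 0 < |x - 1/2| := abs_pos.mpr (sub_ne_zero.mpr ha₀)
        obtain ⟨k, hk⟩ := exists_nat_one_div_lt (show (0:ℝ) < |x - 1/2|/2 by positivity)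
        have hk' : 1/(((k+1 : ℕ)):ℝ) < |x - 1/2|/2 := by push_cast; exact hk
        refine ⟨(Subtype.val : Yn n → Sw) ⁻¹' {p : Sw | (p : ℝ × ℝ).2 = 0 ∧
            (p : ℝ × ℝ).1 ∈ Metric.ball x (|x-1/2|/2)},
          (Subtype.val : Yn n → Sw) ⁻¹' Uw m (k+1),
          Stmt19.traceOpen n _ Metric.isOpen_ball,
          Stmt19.traceUw n m (k+1) hm1 (Nat.le_add_left 1 k),
          ⟨h02, Metric.mem_ball_self (by positivity)⟩,
          Or.inl hpm, ?_⟩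
        rw [Set.eq_empty_iff_forall_notMem]
        rintro q ⟨⟨hq2, hqx⟩, hqU⟩
        rw [Metric.mem_ball, Real.dist_eq] at hqx
        rcases hqU with hqp | ⟨_, hqIoo, _⟩
        · have h2 : ((q : Sw) : ℝ × ℝ).2 = 1/(m:ℝ) := by rw [hqp]
          rw [hq2] at h2
          exact absurd h2.symm (ne_of_gt (Stmt19.one_div_nat_pos hm1))
        · have h1 : |((q : Sw) : ℝ × ℝ).1 - 1/2| < 1/(((k+1:ℕ)):ℝ) := by
            rw [abs_lt]
            exact ⟨by linarith [hqIoo.1], by linarith [hqIoo.2]⟩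
          have htri : |x - 1/2| ≤ |x - ((q : Sw) : ℝ × ℝ).1| + |((q : Sw) : ℝ × ℝ).1 - 1/2| :=
            abs_sub_le _ _ _
          rw [abs_sub_comm] at hqx
          linarith
    obtain ⟨V₀, V₁, hV₀, hV₁, ha₀V, ha₁V, hVd⟩ := sep
    refine ⟨fun a => if a = a₀ then V₀ else if a = a₁ then V₁ else univ, ?_, ?_⟩
    · intro a _
      by_cases h0 : a = a₀
      · subst h0; simp only [if_pos rfl]; exact ⟨hV₀, ha₀V⟩
      · by_cases h1 : a = a₁
        · subst h1; simp only [if_neg h0, if_pos rfl]; exact ⟨hV₁, ha₁V⟩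
        · simp only [if_neg h0, if_neg h1]
          exact ⟨(Twex.induced (Subtype.val : Yn n → Sw)).isOpen_univ, mem_univ a⟩
    · rw [Set.eq_empty_iff_forall_notMem]
      intro q hq
      have hq0 : q ∈ V₀ := by
        have h := Set.mem_iInter₂.mp hq a₀ ha₀A
        simpa using h
      have hq1 : q ∈ V₁ := by
        have h := Set.mem_iInter₂.mp hq a₁ ha₁A
        simp only [if_neg ha₁, if_pos rfl] at h
        exact h
      exact (Set.eq_empty_iff_forall_notMem.mp hVd q) ⟨hq0, hq1⟩
  · -- not n-Hausdorff
    intro hNH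
    set A : Set ↥(Yn n) := {a | ((a : Sw) : ℝ × ℝ).1 = 1/2} with hAdef
    have hAprop : ∀ a ∈ A, ((a : Sw) : ℝ × ℝ).1 = 1/2 := fun a ha => ha
    have hcard : (n : Cardinal) ≤ Cardinal.mk ↥A := by
      set G : Fin n → ↥A := fun j =>
        if hj : (j : ℕ) = 0 then ⟨⟨⟨((1/2:ℝ),(0:ℝ)), Stmt19.mem0⟩, Or.inl rfl⟩, rfl⟩
        else ⟨⟨⟨((1/2:ℝ), 1/(((j:ℕ)):ℝ)), Stmt19.memp _ (Nat.one_le_iff_ne_zero.mpr hj)⟩,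
          Or.inr ⟨(j:ℕ), Nat.one_le_iff_ne_zero.mpr hj, j.isLt, rfl⟩⟩, rfl⟩ with hG
      have hv : ∀ j : Fin n, (((G j : ↥(Yn n)) : Sw) : ℝ × ℝ).2
          = if (j : ℕ) = 0 then 0 else 1/(((j:ℕ)):ℝ) := by
        intro j
        by_cases hj : (j : ℕ) = 0
        · simp only [hG]; rw [dif_pos hj, if_pos hj]
        · simp only [hG]; rw [dif_neg hj, if_neg hj]
      have hGi : Function.Injective G := by
        intro i j hij
        have h2 := congrArg (fun a : ↥A => (((a : ↥(Yn n)) : Sw) : ℝ × ℝ).2) hij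
        rw [hv i, hv j] at h2
        by_cases hi : (i : ℕ) = 0 <;> by_cases hj : (j : ℕ) = 0
        · exact Fin.ext (by omega)
        · rw [if_pos hi, if_neg hj] at h2
          exact absurd h2.symm
            (ne_of_gt (Stmt19.one_div_nat_pos (Nat.one_le_iff_ne_zero.mpr hj)))
        · rw [if_neg hi, if_pos hj] at h2
          exact absurd h2
            (ne_of_gt (Stmt19.one_div_nat_pos (Nat.one_le_iff_ne_zero.mpr hi)))
        · rw [if_neg hi, if_neg hj] at h2
          have hi' : (((i:ℕ)):ℝ) ≠ 0 := Nat.cast_ne_zero.mpr hi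
          have hj' : (((j:ℕ)):ℝ) ≠ 0 := Nat.cast_ne_zero.mpr hj
          have hcast : (((i:ℕ)):ℝ) = (((j:ℕ)):ℝ) := by
            field_simp at h2
            exact_mod_cast h2.symm
          exact Fin.ext (Nat.cast_injective hcast)
      calc (n : Cardinal) = Cardinal.mk (Fin n) := (Cardinal.mk_fin n).symm
        _ ≤ Cardinal.mk ↥A := Cardinal.mk_le_of_injective hGi
    obtain ⟨U, hU, hI⟩ := hNH A hcard
    have hEx : ∀ a : ↥(Yn n), ∃ ε : ℝ, 0 < ε ∧ (a ∈ A →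
        ∀ x : Icc (0:ℝ) 1, (x:ℝ) ≠ 1/2 → |(x:ℝ) - 1/2| < ε →
          (⟨Stmt19.linePt x, Or.inl rfl⟩ : ↥(Yn n)) ∈ U a) := by
      intro a
      by_cases ha : a ∈ A
      · obtain ⟨hUo, haU⟩ := hU a ha
        obtain ⟨V, hV, hpre⟩ := hUo
        obtain ⟨ε, hε, H⟩ := Stmt19.punct V hV (a : Sw) (hAprop a ha)
          (by rw [← hpre] at haU; exact haU)
        refine ⟨ε, hε, fun _ x hx hlt => ?_⟩
        rw [← hpre]
        exact H x hx hlt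
      · exact ⟨1, one_pos, fun h => absurd h ha⟩
    choose ε hεpos hεP using hEx
    obtain ⟨f, hf⟩ := Stmt19.injFin n hn A hAprop
    have hfinA : A.Finite := Set.finite_coe_iff.mp (Finite.of_injective f hf)
    have ha0A : (⟨⟨((1/2:ℝ),(0:ℝ)), Stmt19.mem0⟩, Or.inl rfl⟩ : ↥(Yn n)) ∈ A := rfl
    set t := hfinA.toFinset with ht
    have htne : t.Nonempty := ⟨_, hfinA.mem_toFinset.mpr ha0A⟩
    set εm := t.inf' htne ε with hεm
    have hεmpos : 0 < εm := by
      rw [hεm, Finset.lt_inf'_iff]; exact fun a _ => hεpos a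
    set δ := min εm (1/2) with hδ
    have hδpos : 0 < δ := lt_min hεmpos (by norm_num)
    have hδle : δ ≤ 1/2 := min_le_right _ _
    have hx0mem : (1/2 + δ/2 : ℝ) ∈ Icc (0:ℝ) 1 := ⟨by linarith, by linarith⟩
    have hqmem : (⟨Stmt19.linePt ⟨1/2 + δ/2, hx0mem⟩, Or.inl rfl⟩ : ↥(Yn n)) ∈ ⋂ a ∈ A, U a := by
      rw [Set.mem_iInter₂]
      intro a ha
      refine hεP a ha ⟨1/2 + δ/2, hx0mem⟩ (ne_of_gt (by linarith)) ?_
      have h1 : εm ≤ ε a := Finset.inf'_le _ (hfinA.mem_toFinset.mpr ha)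
      have h2 : |(1/2 + δ/2 : ℝ) - 1/2| = δ/2 := by
        rw [show (1/2 + δ/2 : ℝ) - 1/2 = δ/2 by ring]
        exact abs_of_pos (by positivity)
      have h3 : δ ≤ εm := min_le_left _ _
      rw [h2]
      linarith
    rw [hI] at hqmem
    exact hqmem
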